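/- Let K be a field and R a commutative K-algebra. If φ₁, φ₂ are iterative derivations of R over K that commute, i.e. φ₁^(i) ∘ φ₂^(j) = φ₂^(j) ∘ φ₁^(i) for all i, j ∈ ℕ, then their product φ₁·φ₂ (with components (φ₁·φ₂)^(k) = Σ_{i+j=k} φ₁^(i)∘φ₂^(j)) is again an iterative derivation. -/

import Mathlib

/-!
Write `φ⁽ⁱ⁾ ∈ End_K R` for the coefficient maps of `φ : R → R⟦X⟧`; iterativity says
`φ⁽ⁱ⁾ φ⁽ʲ⁾ = C(i+j, i) φ⁽ⁱ⁺ʲ⁾`. For `χ⁽ᵏ⁾ = ∑_{a+b=k} φ₁⁽ᵃ⁾ φ₂⁽ᵇ⁾`, commutativity lets one regroup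
`χ⁽ⁱ⁾ χ⁽ʲ⁾` as `∑ (φ₁⁽ᵃ⁾ φ₁⁽ᶜ⁾)(φ₂⁽ᵇ⁾ φ₂⁽ᵈ⁾) = ∑_{p₁+p₂=i+j} (∑_{a+b=i} C(p₁,a) C(p₂,b)) φ₁⁽ᵖ¹⁾ φ₂⁽ᵖ²⁾`,
and the inner sum is `C(i+j, i)` by Vandermonde's identity. That `χ` is a `K`-algebra map is seen
by writing it as `φ₂`, followed by `φ₁` applied coefficientwise, followed by the substitution
`R⟦X⟧⟦Y⟧ → R⟦X⟧`, `Y ↦ X`.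
-/

open PowerSeries Finset.HasAntidiagonal

section Antidiagonal

variable {M : Type*} [AddCommMonoid M]

theorem Finset.sum_antidiagonal_antidiagonal_antidiagonal_comm (k : ℕ)
    (f : ℕ → ℕ → ℕ → ℕ → M) :
    ∑ p ∈ antidiagonal k, ∑ u ∈ antidiagonal p.1, ∑ q ∈ antidiagonal p.2, f u.1 u.2 q.1 q.2 =
      ∑ p ∈ antidiagonal k, ∑ u ∈ antidiagonal p.1, ∑ q ∈ antidiagonal p.2,
        f u.1 q.1 u.2 q.2 := by
  simp only [← Finset.sum_product' (antidiagonal _), Finset.sum_sigma']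
  refine Finset.sum_nbij' (fun x => ⟨(x.2.1.1 + x.2.2.1, x.2.1.2 + x.2.2.2),
      ((x.2.1.1, x.2.2.1), (x.2.1.2, x.2.2.2))⟩)
    (fun x => ⟨(x.2.1.1 + x.2.2.1, x.2.1.2 + x.2.2.2),
      ((x.2.1.1, x.2.2.1), (x.2.1.2, x.2.2.2))⟩) ?_ ?_ ?_ ?_ ?_ <;>
  · rintro ⟨⟨p₁, p₂⟩, ⟨a, b⟩, ⟨c, d⟩⟩
    simp +contextual only [Finset.mem_sigma, Finset.mem_product, HasAntidiagonal.mem_antidiagonal,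
      and_self, and_true, and_imp, implies_true] <;> omega

theorem Finset.sum_antidiagonal_add_left {i : ℕ} (j : ℕ) {v : ℕ × ℕ} (hv : v ∈ antidiagonal i)
    (h : ℕ × ℕ → M) (hh : ∀ p, ¬v ≤ p → h p = 0) :
    ∑ w ∈ antidiagonal j, h (v + w) = ∑ p ∈ antidiagonal (i + j), h p := by
  rw [HasAntidiagonal.mem_antidiagonal] at hv
  refine (Finset.sum_map (antidiagonal j) (addLeftEmbedding v) h).symm.trans ?_
  refine Finset.sum_subset (fun p => ?_) fun p hp hpv => hh p fun hle => hpv ?_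
  · simp only [Finset.mem_map, HasAntidiagonal.mem_antidiagonal, addLeftEmbedding_apply]
    rintro ⟨w, hw, rfl⟩
    simp only [Prod.fst_add, Prod.snd_add]
    omega
  · rw [HasAntidiagonal.mem_antidiagonal] at hp
    rw [Prod.le_def] at hle
    refine Finset.mem_map.2 ⟨(p.1 - v.1, p.2 - v.2), ?_, ?_⟩
    · rw [HasAntidiagonal.mem_antidiagonal]; omega
    · simp only [addLeftEmbedding_apply, Prod.ext_iff, Prod.fst_add, Prod.snd_add]
      omega

end Antidiagonal

def IsIterative {A : Type*} [Semiring A] (d : ℕ → A) : Prop :=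
  ∀ i j, d i * d j = (i + j).choose i • d (i + j)

namespace IsIterative

variable {A : Type*} [Semiring A] {d₁ d₂ : ℕ → A}

theorem mul_mul_mul_mul_of_commute (h₁ : IsIterative d₁) (h₂ : IsIterative d₂)
    (hcomm : ∀ i j, Commute (d₁ i) (d₂ j)) (a b c d : ℕ) :
    d₁ a * d₂ b * (d₁ c * d₂ d) =
      ((a + c).choose a * (b + d).choose b) • (d₁ (a + c) * d₂ (b + d)) := by
  rw [mul_assoc, ← mul_assoc (d₂ b), ← (hcomm c b).eq, mul_assoc, ← mul_assoc, h₁, h₂,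
    smul_mul_smul_comm]

theorem sum_antidiagonal_mul (h₁ : IsIterative d₁) (h₂ : IsIterative d₂)
    (hcomm : ∀ i j, Commute (d₁ i) (d₂ j)) :
    IsIterative fun k => ∑ p ∈ antidiagonal k, d₁ p.1 * d₂ p.2 := by
  intro i j
  let term (v p : ℕ × ℕ) : A := (p.1.choose v.1 * p.2.choose v.2) • (d₁ p.1 * d₂ p.2)
  have term_eq_zero (v p : ℕ × ℕ) (hvp : ¬v ≤ p) : term v p = 0 := by
    rcases not_and_or.1 (Prod.le_def.not.1 hvp) with hlt | hlt <;>
      simp [term, Nat.choose_eq_zero_of_lt (not_le.1 hlt)]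
  calc (∑ v ∈ antidiagonal i, d₁ v.1 * d₂ v.2) * ∑ w ∈ antidiagonal j, d₁ w.1 * d₂ w.2
      = ∑ v ∈ antidiagonal i, ∑ w ∈ antidiagonal j, term v (v + w) := by
        rw [Finset.sum_mul_sum]
        exact Finset.sum_congr rfl fun v _ => Finset.sum_congr rfl fun w _ =>
          mul_mul_mul_mul_of_commute h₁ h₂ hcomm v.1 v.2 w.1 w.2
    _ = ∑ p ∈ antidiagonal (i + j), ∑ v ∈ antidiagonal i, term v p := by
        -- the binomial coefficients in `term v p` vanish unless `v ≤ p`, i.e. `p = v + w`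
        refine (Finset.sum_congr rfl fun v hv => ?_).trans Finset.sum_comm
        exact Finset.sum_antidiagonal_add_left j hv (term v) (term_eq_zero v)
    _ = (i + j).choose i • ∑ p ∈ antidiagonal (i + j), d₁ p.1 * d₂ p.2 := by
        rw [Finset.smul_sum]
        refine Finset.sum_congr rfl fun p hp => ?_
        rw [mem_antidiagonal] at hp
        rw [← Finset.sum_smul, ← hp, Nat.add_choose_eq]

end IsIterative

namespace PowerSeries

variable {R : Type*} [CommSemiring R]

theorem sum_antidiagonal_coeff_coeff_C (f : R⟦X⟧) (k : ℕ) :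
    ∑ p ∈ antidiagonal k, coeff p.1 (coeff p.2 (C f)) = coeff k f := by
  refine (Finset.sum_eq_single_of_mem (k, 0) (by simp) fun p hp hne => ?_).trans (by simp)
  rw [mem_antidiagonal] at hp
  rw [Ne, Prod.ext_iff] at hne
  rw [coeff_C, if_neg (by omega), map_zero]

variable (R) in
/-- The substitution `∑ₘ fₘ(X) Yᵐ ↦ ∑ₘ fₘ(X) Xᵐ`. -/
noncomputable def diagonalSum : R⟦X⟧⟦X⟧ →ₐ[R] R⟦X⟧ where
  toFun F := mk fun k => ∑ p ∈ antidiagonal k, coeff p.1 (coeff p.2 F)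
  map_one' := by
    ext k
    simp_rw [coeff_mk, ← map_one C, sum_antidiagonal_coeff_coeff_C]
  map_mul' F G := by
    ext k
    simp only [coeff_mk, coeff_mul, map_sum, Finset.sum_mul_sum]
    refine (Finset.sum_congr rfl fun x _ => Finset.sum_comm).trans ?_
    exact Finset.sum_antidiagonal_antidiagonal_antidiagonal_comm k
      fun a b c d => coeff a (coeff c F) * coeff b (coeff d G)
  map_zero' := by ext; simp
  map_add' F G := by ext; simp [Finset.sum_add_distrib]
  commutes' r := by
    ext k
    simp_rw [coeff_mk, PowerSeries.algebraMap_apply, sum_antidiagonal_coeff_coeff_C]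

variable {K : Type*} [CommSemiring K] [Algebra K R]

noncomputable def derivationMul (φ₁ φ₂ : R →ₐ[K] R⟦X⟧) : R →ₐ[K] R⟦X⟧ :=
  ((diagonalSum R).restrictScalars K).comp ((mapAlgHom φ₁).comp φ₂)

theorem coeff_derivationMul (φ₁ φ₂ : R →ₐ[K] R⟦X⟧) (r : R) (k : ℕ) :
    coeff k (derivationMul φ₁ φ₂ r) = ∑ p ∈ antidiagonal k, coeff p.1 (φ₁ (coeff p.2 (φ₂ r))) := by
  simp [derivationMul, diagonalSum, mapAlgHom_apply, coeff_map]

theorem constantCoeff_derivationMul (φ₁ φ₂ : R →ₐ[K] R⟦X⟧) (r : R) :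
    constantCoeff (derivationMul φ₁ φ₂ r) = constantCoeff (φ₁ (constantCoeff (φ₂ r))) := by
  simp only [← coeff_zero_eq_constantCoeff_apply, coeff_derivationMul, antidiagonal_zero,
    Finset.sum_singleton]

noncomputable def component (φ : R →ₐ[K] R⟦X⟧) (i : ℕ) : Module.End K R :=
  ((coeff i).restrictScalars K).comp φ.toLinearMap

theorem component_apply (φ : R →ₐ[K] R⟦X⟧) (i : ℕ) (r : R) : component φ i r = coeff i (φ r) :=
  rfl

theorem isIterative_component_iff (φ : R →ₐ[K] R⟦X⟧) :
    IsIterative (component φ) ↔ ∀ i j r,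
      coeff i (φ (coeff j (φ r))) = ((i + j).choose i : K) • coeff (i + j) (φ r) := by
  simp only [IsIterative, LinearMap.ext_iff, Module.End.mul_apply, LinearMap.smul_apply,
    component_apply, Nat.cast_smul_eq_nsmul]

theorem component_derivationMul (φ₁ φ₂ : R →ₐ[K] R⟦X⟧) (k : ℕ) :
    component (derivationMul φ₁ φ₂) k =
      ∑ p ∈ antidiagonal k, component φ₁ p.1 * component φ₂ p.2 := by
  ext r
  simp [component_apply, coeff_derivationMul]

end PowerSeries

/-- The product of two commuting iterative derivations of `R` over `K`
(with components `(φ₁·φ₂)⁽ᵏ⁾ = Σ_{i+j=k} φ₁⁽ⁱ⁾∘φ₂⁽ʲ⁾`) is again an iterative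
derivation. -/
theorem product_of_commuting_iterative_derivations {K R : Type*} [Field K] [CommRing R]
    [Algebra K R] (φ₁ φ₂ : R →ₐ[K] PowerSeries R)
    (h01 : ∀ r : R, PowerSeries.constantCoeff (φ₁ r) = r)
    (h02 : ∀ r : R, PowerSeries.constantCoeff (φ₂ r) = r)
    (hiter1 : ∀ (i j : ℕ) (r : R),
      PowerSeries.coeff i (φ₁ (PowerSeries.coeff j (φ₁ r))) =
        (((i + j).choose i : K)) • PowerSeries.coeff (i + j) (φ₁ r))
    (hiter2 : ∀ (i j : ℕ) (r : R),
      PowerSeries.coeff i (φ₂ (PowerSeries.coeff j (φ₂ r))) =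
        (((i + j).choose i : K)) • PowerSeries.coeff (i + j) (φ₂ r))
    (hcomm : ∀ (i j : ℕ) (r : R),
      PowerSeries.coeff i (φ₁ (PowerSeries.coeff j (φ₂ r))) =
        PowerSeries.coeff j (φ₂ (PowerSeries.coeff i (φ₁ r)))) :
    ∃ χ : R →ₐ[K] PowerSeries R,
      (∀ (r : R) (k : ℕ), PowerSeries.coeff k (χ r) =
          ∑ p ∈ Finset.HasAntidiagonal.antidiagonal k,
            PowerSeries.coeff p.1 (φ₁ (PowerSeries.coeff p.2 (φ₂ r)))) ∧
      (∀ r : R, PowerSeries.constantCoeff (χ r) = r) ∧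
      (∀ (i j : ℕ) (r : R),
        PowerSeries.coeff i (χ (PowerSeries.coeff j (χ r))) =
          (((i + j).choose i : K)) • PowerSeries.coeff (i + j) (χ r)) := by
  refine ⟨derivationMul φ₁ φ₂, coeff_derivationMul φ₁ φ₂, fun r => ?_, ?_⟩
  · rw [constantCoeff_derivationMul, h02, h01]
  rw [← isIterative_component_iff, funext (component_derivationMul φ₁ φ₂)]
  exact ((isIterative_component_iff φ₁).2 hiter1).sum_antidiagonal_mul
    ((isIterative_component_iff φ₂).2 hiter2) fun i j => LinearMap.ext (hcomm i j)
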